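/- arXiv:2011.11065 — 2 statements merged into one kernel-verified Lean document; each statement's English description precedes it below -/
import Mathlib

section
/- Let X be a finite-dimensional real vector space and Y a finite-dimensional real inner product space with norm ‖·‖. Let s be a symmetric positive semidefinite bilinear form on X, let c be a symmetric positive semidefinite bilinear form on Y, and let b : X × Y → ℝ be bilinear. Assume: (inf-sup) for every σ ∈ Y there exists v ∈ X with b(v, σ) ≥ (1/2)‖σ‖²; and (nondegeneracy on the kernel of s) every u ∈ X satisfying s(u, u) = 0 and b(u, σ) = 0 for all σ ∈ Y must be zero. Then for every linear functional F : Y → ℝ there exists a unique pair (u, λ) ∈ X × Y such that s(u, v) + b(v, λ) = 0 for all v ∈ X and −c(λ, σ) + b(u, σ) = F(σ) for all σ ∈ Y. -/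
set_option maxHeartbeats 1000000


/-- existence and uniqueness for the abstract M-PDWG system. -/
theorem stmt_2 {X Y : Type*} [AddCommGroup X] [Module ℝ X] [FiniteDimensional ℝ X]
    [NormedAddCommGroup Y] [InnerProductSpace ℝ Y] [FiniteDimensional ℝ Y]
    (s : X →ₗ[ℝ] X →ₗ[ℝ] ℝ) (c : Y →ₗ[ℝ] Y →ₗ[ℝ] ℝ) (b : X →ₗ[ℝ] Y →ₗ[ℝ] ℝ)
    (hs_symm : ∀ u v : X, s u v = s v u) (hs_pos : ∀ v : X, 0 ≤ s v v)
    (hc_symm : ∀ l m : Y, c l m = c m l) (hc_pos : ∀ m : Y, 0 ≤ c m m)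
    (hinfsup : ∀ σ : Y, ∃ v : X, (1/2) * ‖σ‖^2 ≤ b v σ)
    (hker : ∀ u : X, s u u = 0 → (∀ σ : Y, b u σ = 0) → u = 0)
    (F : Y →ₗ[ℝ] ℝ) :
    ∃! p : X × Y, (∀ v : X, s p.1 v + b v p.2 = 0) ∧
      (∀ σ : Y, -c p.2 σ + b p.1 σ = F σ) := by
  classical
  set L : (X × Y) →ₗ[ℝ] (Module.Dual ℝ X × Module.Dual ℝ Y) :=
    ((s.comp (LinearMap.fst ℝ X Y)) + (b.flip.comp (LinearMap.snd ℝ X Y))).prod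
      ((b.comp (LinearMap.fst ℝ X Y)) - (c.comp (LinearMap.snd ℝ X Y))) with hL
  have hLapp : ∀ p : X × Y, L p = (s p.1 + b.flip p.2, b p.1 - c p.2) := fun p => rfl
  -- injectivity
  have hinj : Function.Injective L := by
    rw [← LinearMap.ker_eq_bot, LinearMap.ker_eq_bot']
    intro p hp
    rw [hLapp p, Prod.mk_eq_zero] at hp
    obtain ⟨h1, h2⟩ := hp
    have h1' : ∀ v : X, s p.1 v + b v p.2 = 0 := by
      intro v
      have := DFunLike.congr_fun h1 v
      simpa using this
    have h2' : ∀ σ : Y, b p.1 σ - c p.2 σ = 0 := by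
      intro σ
      have := DFunLike.congr_fun h2 σ
      simpa using this
    have hA := h1' p.1
    have hB := h2' p.2
    have hss : s p.1 p.1 = 0 := by
      have := hs_pos p.1; have := hc_pos p.2; linarith
    have hcc : c p.2 p.2 = 0 := by
      have := hs_pos p.1; have := hc_pos p.2; linarith
    have hcz : ∀ σ : Y, c p.2 σ = 0 := by
      intro σ
      by_contra ha
      have key : ∀ t : ℝ, 0 ≤ c σ σ + 2 * t * c p.2 σ := by
        intro t
        have h0 := hc_pos (σ + t • p.2)
        have hexp : c (σ + t • p.2) (σ + t • p.2)
            = c σ σ + 2 * t * c p.2 σ := by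
          simp [map_add, map_smul, LinearMap.add_apply, LinearMap.smul_apply,
            smul_eq_mul, hcc, hc_symm σ p.2]
          ring
        rw [hexp] at h0
        exact h0
      have hkey := key (-(c σ σ + 1) / (2 * c p.2 σ))
      have hA' : 2 * (-(c σ σ + 1) / (2 * c p.2 σ)) * c p.2 σ = -(c σ σ + 1) := by
        field_simp
      rw [hA'] at hkey
      linarith
    have hbz : ∀ σ : Y, b p.1 σ = 0 := by
      intro σ
      have := h2' σ
      rw [hcz σ] at this
      linarith
    have hu : p.1 = 0 := hker p.1 hss hbz
    have hblam : ∀ v : X, b v p.2 = 0 := by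
      intro v
      have := h1' v
      rw [hu] at this
      simpa using this
    have hlam : p.2 = 0 := by
      obtain ⟨v, hv⟩ := hinfsup p.2
      rw [hblam v] at hv
      have hn : ‖p.2‖ ^ 2 ≤ 0 := by linarith
      have : ‖p.2‖ = 0 := by nlinarith [norm_nonneg p.2]
      exact norm_eq_zero.mp this
    exact Prod.ext hu hlam
  -- surjectivity from dimension count
  have hdim : Module.finrank ℝ (X × Y)
      = Module.finrank ℝ (Module.Dual ℝ X × Module.Dual ℝ Y) := by
    simp [Module.finrank_prod, Subspace.dual_finrank_eq]
  have hsurj : Function.Surjective L :=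
    (LinearMap.injective_iff_surjective_of_finrank_eq_finrank hdim).mp hinj
  obtain ⟨p, hp⟩ := hsurj (0, F)
  rw [hLapp p, Prod.mk.injEq] at hp
  refine ⟨p, ⟨?_, ?_⟩, ?_⟩
  · intro v
    have := DFunLike.congr_fun hp.1 v
    simpa using this
  · intro σ
    have := DFunLike.congr_fun hp.2 σ
    simp at this
    linarith
  · rintro q ⟨hq1, hq2⟩
    apply hinj
    rw [hLapp q, hLapp p, hp.1, hp.2]
    refine Prod.ext ?_ ?_
    · ext v
      simpa using hq1 v
    · ext σ
      have := hq2 σ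
      simp
      linarith
end

section
/- Let X be a real vector space and Y a finite-dimensional real inner product space with norm ‖·‖. Let s be a symmetric positive semidefinite bilinear form on X, c a symmetric positive semidefinite bilinear form on Y, and b : X × Y → ℝ bilinear. Let e ∈ X, γ ∈ Y, and let ε₁ ≥ 0, ε₂ ≥ 0 and C₀ ≥ 0 be real numbers. Assume: (i) |s(e, v) + b(v, γ)| ≤ ε₁·√(s(v, v)) for all v ∈ X; (ii) |−c(γ, σ) + b(e, σ)| ≤ ε₂·‖σ‖ for all σ ∈ Y; (iii) for every σ ∈ Y there exists v ∈ X with b(v, σ) ≥ (1/2)‖σ‖² and s(v, v) ≤ C₀‖σ‖². Then √(s(e, e)) ≤ ε₁ + 2√C₀·ε₂ + √(2√C₀·ε₁·ε₂) and ‖γ‖ ≤ 2√C₀·(ε₁ + √(s(e, e))). -/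
/-- Cauchy–Schwarz for a symmetric positive semidefinite bilinear form. -/
lemma cs_psd {X : Type*} [AddCommGroup X] [Module ℝ X]
    (s : X →ₗ[ℝ] X →ₗ[ℝ] ℝ) (hs_symm : ∀ u v : X, s u v = s v u)
    (hs_pos : ∀ v : X, 0 ≤ s v v) (u v : X) :
    |s u v| ≤ Real.sqrt (s u u) * Real.sqrt (s v v) := by
  have hq : ∀ x : ℝ, 0 ≤ s v v * (x * x) + (2 * s u v) * x + s u u := by
    intro x
    have := hs_pos (x • v + u)
    simp only [map_add, map_smul, LinearMap.add_apply, LinearMap.smul_apply,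
      smul_eq_mul] at this
    rw [hs_symm v u] at this
    nlinarith
  have hd := discrim_le_zero hq
  unfold discrim at hd
  have h2 : (s u v) ^ 2 ≤ s u u * s v v := by nlinarith
  calc |s u v| = Real.sqrt ((s u v) ^ 2) := by rw [Real.sqrt_sq_eq_abs]
    _ ≤ Real.sqrt (s u u * s v v) := Real.sqrt_le_sqrt h2
    _ = Real.sqrt (s u u) * Real.sqrt (s v v) := Real.sqrt_mul (hs_pos u) _

/-- abstract form of the optimal-order error estimate for the
M-PDWG scheme. -/
theorem stmt_7 {X Y : Type*} [AddCommGroup X] [Module ℝ X]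
    [NormedAddCommGroup Y] [InnerProductSpace ℝ Y] [FiniteDimensional ℝ Y]
    (s : X →ₗ[ℝ] X →ₗ[ℝ] ℝ) (c : Y →ₗ[ℝ] Y →ₗ[ℝ] ℝ) (b : X →ₗ[ℝ] Y →ₗ[ℝ] ℝ)
    (hs_symm : ∀ u v : X, s u v = s v u) (hs_pos : ∀ v : X, 0 ≤ s v v)
    (hc_symm : ∀ l m : Y, c l m = c m l) (hc_pos : ∀ m : Y, 0 ≤ c m m)
    (e : X) (γ : Y) (ε₁ ε₂ C₀ : ℝ)
    (hε₁ : 0 ≤ ε₁) (hε₂ : 0 ≤ ε₂) (hC₀ : 0 ≤ C₀)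
    (h1 : ∀ v : X, |s e v + b v γ| ≤ ε₁ * Real.sqrt (s v v))
    (h2 : ∀ σ : Y, |-c γ σ + b e σ| ≤ ε₂ * ‖σ‖)
    (hinfsup : ∀ σ : Y, ∃ v : X, (1/2) * ‖σ‖^2 ≤ b v σ ∧ s v v ≤ C₀ * ‖σ‖^2) :
    Real.sqrt (s e e) ≤ ε₁ + 2 * Real.sqrt C₀ * ε₂ +
        Real.sqrt (2 * Real.sqrt C₀ * ε₁ * ε₂) ∧
      ‖γ‖ ≤ 2 * Real.sqrt C₀ * (ε₁ + Real.sqrt (s e e)) := by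
  set t := Real.sqrt (s e e) with ht
  have ht0 : 0 ≤ t := Real.sqrt_nonneg _
  have ht2 : t ^ 2 = s e e := Real.sq_sqrt (hs_pos e)
  set c0 := Real.sqrt C₀ with hc0def
  have hc00 : 0 ≤ c0 := Real.sqrt_nonneg _
  -- Step 1: bound ‖γ‖
  have hγ : ‖γ‖ ≤ 2 * c0 * (ε₁ + t) := by
    obtain ⟨v, hb, hsv⟩ := hinfsup γ
    have hsvv := hs_pos v
    have hsv' : Real.sqrt (s v v) ≤ c0 * ‖γ‖ := by
      have : Real.sqrt (s v v) ≤ Real.sqrt (C₀ * ‖γ‖ ^ 2) := Real.sqrt_le_sqrt hsv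
      calc Real.sqrt (s v v) ≤ Real.sqrt (C₀ * ‖γ‖ ^ 2) := this
        _ = c0 * ‖γ‖ := by
            rw [Real.sqrt_mul hC₀, Real.sqrt_sq (norm_nonneg _)]
    have hcs : |s e v| ≤ t * Real.sqrt (s v v) := cs_psd s hs_symm hs_pos e v
    have h1v := h1 v
    have hbv : b v γ ≤ (ε₁ + t) * Real.sqrt (s v v) := by
      have : b v γ = (s e v + b v γ) - s e v := by ring
      rw [this]
      have := abs_le.mp h1v
      have := abs_le.mp hcs
      nlinarith
    have key : (1/2) * ‖γ‖ ^ 2 ≤ (ε₁ + t) * (c0 * ‖γ‖) := by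
      calc (1/2) * ‖γ‖ ^ 2 ≤ b v γ := hb
        _ ≤ (ε₁ + t) * Real.sqrt (s v v) := hbv
        _ ≤ (ε₁ + t) * (c0 * ‖γ‖) := by
            apply mul_le_mul_of_nonneg_left hsv' (by positivity)
    rcases eq_or_lt_of_le (norm_nonneg γ) with h0 | h0
    · rw [← h0]; positivity
    · nlinarith
  -- Step 2: bound s e e
  have hsee : t ^ 2 ≤ (ε₁ + 2 * c0 * ε₂) * t + 2 * c0 * ε₁ * ε₂ := by
    have h1e := abs_le.mp (h1 e)
    have h2γ := abs_le.mp (h2 γ)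
    have hcγ := hc_pos γ
    have : s e e ≤ ε₁ * t + ε₂ * ‖γ‖ := by nlinarith
    nlinarith [norm_nonneg γ]
  refine ⟨?_, hγ⟩
  -- quadratic trick: t² ≤ A t + B with A, B ≥ 0 implies t ≤ A + √B
  set A := ε₁ + 2 * c0 * ε₂ with hA
  set B := 2 * c0 * ε₁ * ε₂ with hB
  have hA0 : 0 ≤ A := by positivity
  have hB0 : 0 ≤ B := by positivity
  have hsB : Real.sqrt B ^ 2 = B := Real.sq_sqrt hB0
  by_contra hcon
  push_neg at hcon
  have hsB0 : 0 ≤ Real.sqrt B := Real.sqrt_nonneg _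
  nlinarith [hcon, hsee]
end
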